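/- arXiv:2604.14249 — 2 statements merged into one kernel-verified Lean document; each statement's English description precedes it below -/
import Mathlib

section
/- (Scale Invariance of MAPCA, necessity.) Let Σ and M be symmetric positive definite real p×p matrices, let C = diag(c₁,…,c_p) be a diagonal matrix with strictly positive diagonal entries, and let M̃ be a symmetric real p×p matrix. Suppose that for every λ ∈ ℝ and every w ∈ ℝ^p with Σ w = λ M w one has (C Σ C)(C⁻¹ w) = λ · M̃ · (C⁻¹ w). Then M̃ = C M C. -/
/-!
If `S w = λ M w`, then `(C S C) (C⁻¹ w) = λ (C M C) (C⁻¹ w)`, so the hypothesis makes `M̃` and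
`C M C` agree on `C⁻¹ w` whenever `λ ≠ 0`, which holds for every eigenpair since `S` is
invertible. Writing `M = Bᴴ B`, the vectors `B⁻¹ v`, for `v` running over an eigenbasis of the
Hermitian matrix `B⁻ᴴ S B⁻¹`, form a basis of generalized eigenvectors; as `C` is invertible,
`M̃ = C M C` follows.
-/

open Matrix
open scoped ComplexOrder

namespace Matrix

variable {n 𝕜 : Type*} [Fintype n] [DecidableEq n] [RCLike 𝕜]

theorem ext_of_mulVec_basis {R : Type*} [CommSemiring R] {A B : Matrix n n R}
    (b : Module.Basis n R (n → R)) (h : ∀ j, A *ᵥ b j = B *ᵥ b j) : A = B :=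
  toLin'.injective (b.ext h)

theorem PosDef.exists_isUnit_eq_conjTranspose_mul_self {M : Matrix n n 𝕜} (hM : M.PosDef) :
    ∃ B : Matrix n n 𝕜, IsUnit B ∧ M = Bᴴ * B := by
  open MatrixOrder in
  obtain ⟨B, hB⟩ := CStarAlgebra.nonneg_iff_eq_star_mul_self.mp hM.posSemidef.nonneg
  refine ⟨B, ?_, hB⟩
  have hdet := (isUnit_iff_isUnit_det _).mp (hB ▸ hM.isUnit : IsUnit (star B * B))
  rw [det_mul] at hdet
  exact (isUnit_iff_isUnit_det _).mpr (isUnit_of_mul_isUnit_right hdet)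

theorem IsHermitian.exists_basis_mulVec_eq_smul_mulVec {S M : Matrix n n 𝕜}
    (hS : S.IsHermitian) (hM : M.PosDef) :
    ∃ (b : Module.Basis n 𝕜 (n → 𝕜)) (lam : n → 𝕜), ∀ j, S *ᵥ b j = lam j • M *ᵥ b j := by
  obtain ⟨B, hB, rfl⟩ := hM.exists_isUnit_eq_conjTranspose_mul_self
  have hBdet := (isUnit_iff_isUnit_det B).mp hB
  have hA : (B⁻¹ᴴ * S * B⁻¹).IsHermitian := by
    simpa only [conjTranspose_conjTranspose] using isHermitian_conjTranspose_mul_mul B⁻¹ hS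
  have hBinv : Invertible B⁻¹ := invertibleOfRightInverse _ _ (nonsing_inv_mul B hBdet)
  refine ⟨(hA.eigenvectorBasis.toBasis.map (WithLp.linearEquiv 2 𝕜 (n → 𝕜))).map
    (toLinearEquiv' B⁻¹ hBinv), fun j => hA.eigenvalues j, fun j => ?_⟩
  set v : n → 𝕜 := ⇑(hA.eigenvectorBasis j)
  have hv : (B⁻¹ᴴ * S * B⁻¹) *ᵥ v = (hA.eigenvalues j : 𝕜) • v := by
    rw [hA.mulVec_eigenvectorBasis j, RCLike.real_smul_eq_coe_smul (K := 𝕜)]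
  change S *ᵥ (B⁻¹ *ᵥ v) = _ • (Bᴴ * B) *ᵥ (B⁻¹ *ᵥ v)
  have hBB : Bᴴ * B⁻¹ᴴ = 1 := by
    rw [← conjTranspose_mul, nonsing_inv_mul B hBdet, conjTranspose_one]
  calc S *ᵥ (B⁻¹ *ᵥ v) = Bᴴ *ᵥ ((B⁻¹ᴴ * S * B⁻¹) *ᵥ v) := by
        simp only [mulVec_mulVec, ← Matrix.mul_assoc, hBB, Matrix.one_mul]
    _ = (hA.eigenvalues j : 𝕜) • (Bᴴ * B) *ᵥ (B⁻¹ *ᵥ v) := by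
        rw [hv, mulVec_smul, mulVec_mulVec, Matrix.mul_assoc Bᴴ, mul_nonsing_inv B hBdet,
          Matrix.mul_one]

theorem eq_mul_mul_of_forall_generalized_eigenpair {S M C Mt : Matrix n n 𝕜}
    (hS : S.IsHermitian) (hSu : IsUnit S) (hM : M.PosDef) (hC : IsUnit C)
    (h : ∀ (lam : 𝕜) (w : n → 𝕜), S *ᵥ w = lam • (M *ᵥ w) →
      (C * S * C) *ᵥ (C⁻¹ *ᵥ w) = lam • (Mt *ᵥ (C⁻¹ *ᵥ w))) :
    Mt = C * M * C := by
  have hCdet := (isUnit_iff_isUnit_det C).mp hC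
  obtain ⟨b, lam, hb⟩ := hS.exists_basis_mulVec_eq_smul_mulVec hM
  suffices Mt * C⁻¹ = C * M by
    rw [← this, Matrix.mul_assoc, nonsing_inv_mul C hCdet, Matrix.mul_one]
  refine ext_of_mulVec_basis b fun j => ?_
  have hlam : lam j ≠ 0 := by
    rintro hzero
    have hSb : S *ᵥ b j = S *ᵥ 0 := by rw [hb j, hzero, zero_smul, mulVec_zero]
    exact b.ne_zero j (mulVec_injective_of_isUnit hSu hSb)
  have key := h (lam j) (b j) (hb j)
  rw [mulVec_mulVec, Matrix.mul_assoc, mul_nonsing_inv C hCdet, Matrix.mul_one,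
    ← mulVec_mulVec, hb j, mulVec_smul, mulVec_mulVec, mulVec_mulVec] at key
  exact (smul_right_injective _ hlam key).symm

end Matrix

theorem mapca_scale_invariance_necessity_general {p : ℕ}
    (S M : Matrix (Fin p) (Fin p) ℝ) (hS : S.PosDef) (hM : M.PosDef)
    (c : Fin p → ℝ) (hc : ∀ i, 0 < c i) (C : Matrix (Fin p) (Fin p) ℝ)
    (hC : C = Matrix.diagonal c)
    (Mt : Matrix (Fin p) (Fin p) ℝ)
    (hinv : ∀ (lam : ℝ) (w : Fin p → ℝ), S *ᵥ w = lam • (M *ᵥ w) →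
      (C * S * C) *ᵥ (C⁻¹ *ᵥ w) = lam • (Mt *ᵥ (C⁻¹ *ᵥ w))) :
    Mt = C * M * C :=
  eq_mul_mul_of_forall_generalized_eigenpair hS.isHermitian hS.isUnit hM
    (hC ▸ isUnit_diagonal.mpr (Pi.isUnit_iff.mpr fun i => (hc i).ne'.isUnit)) hinv

/-- Scale invariance of MAPCA (necessity): if under the positive diagonal rescaling
`C` every generalized eigenpair `(λ, w)` of `(Σ, M)` yields the eigenpair
`(λ, C⁻¹ w)` of `(CΣC, M̃)` for a symmetric matrix `M̃`, then necessarily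
`M̃ = C M C`. -/
theorem mapca_scale_invariance_necessity {p : ℕ}
    (S M : Matrix (Fin p) (Fin p) ℝ) (hS : S.PosDef) (hM : M.PosDef)
    (c : Fin p → ℝ) (hc : ∀ i, 0 < c i) (C : Matrix (Fin p) (Fin p) ℝ)
    (hC : C = Matrix.diagonal c)
    (Mt : Matrix (Fin p) (Fin p) ℝ) (hMt : Mt.IsHermitian)
    (hinv : ∀ (lam : ℝ) (w : Fin p → ℝ), S *ᵥ w = lam • (M *ᵥ w) →
      (C * S * C) *ᵥ (C⁻¹ *ᵥ w) = lam • (Mt *ᵥ (C⁻¹ *ᵥ w))) :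
    Mt = C * M * C :=
  mapca_scale_invariance_necessity_general S M hS hM c hc C hC Mt hinv
end

section
/- (Strict Invariance of IPCA.) Let Σ be a symmetric positive definite real p×p matrix, let D := diag(Σ₁₁,…,Σ_pp), and let C = diag(c₁,…,c_p) be a diagonal matrix with strictly positive diagonal entries, with D̃ := diag((CΣC)₁₁,…,(CΣC)_pp). Then for every λ ∈ ℝ and every w ∈ ℝ^p, Σ w = λ D w if and only if (C Σ C)(C⁻¹ w) = λ · D̃ · (C⁻¹ w). In particular, the IPCA eigenvalues are invariant under arbitrary positive diagonal rescaling of the data, and the IPCA eigenvectors transform as w ↦ C⁻¹ w. -/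
open Matrix

/-- Strict invariance of IPCA: with `D = diag(Σ₁₁,…,Σ_pp)` and
`D̃ = diag((CΣC)₁₁,…,(CΣC)_pp)`, for every `λ` and `w` one has `Σ w = λ D w` iff
`(CΣC)(C⁻¹ w) = λ D̃ (C⁻¹ w)`: the IPCA eigenvalues are invariant under arbitrary
positive diagonal rescaling and the eigenvectors transform as `w ↦ C⁻¹ w`. -/
theorem ipca_strict_invariance {p : ℕ}
    (S : Matrix (Fin p) (Fin p) ℝ) (hS : S.PosDef)
    (c : Fin p → ℝ) (hc : ∀ i, 0 < c i) (C : Matrix (Fin p) (Fin p) ℝ)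
    (hC : C = Matrix.diagonal c)
    (D Dt : Matrix (Fin p) (Fin p) ℝ)
    (hD : D = Matrix.diagonal (fun i => S i i))
    (hDt : Dt = Matrix.diagonal (fun i => (C * S * C) i i))
    (lam : ℝ) (w : Fin p → ℝ) :
    S *ᵥ w = lam • (D *ᵥ w) ↔
      (C * S * C) *ᵥ (C⁻¹ *ᵥ w) = lam • (Dt *ᵥ (C⁻¹ *ᵥ w)) := by
  have hcne : ∀ i, c i ≠ 0 := fun i => (hc i).ne'
  have hCinv : C⁻¹ = Matrix.diagonal (fun i => (c i)⁻¹) := by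
    apply Matrix.inv_eq_right_inv
    rw [hC, Matrix.diagonal_mul_diagonal]
    convert Matrix.diagonal_one using 2
    funext i
    exact mul_inv_cancel₀ (hcne i)
  have hCC : C * C⁻¹ = 1 := by
    rw [hCinv, hC, Matrix.diagonal_mul_diagonal]
    convert Matrix.diagonal_one using 2
    funext i
    exact mul_inv_cancel₀ (hcne i)
  -- D̃ = C * D * C
  have hDtCDC : Dt = C * D * C := by
    rw [hDt, hD, hC]
    funext i j
    by_cases h : i = j
    · subst h
      simp [Matrix.diagonal_mul, Matrix.mul_diagonal, Matrix.diagonal_apply_eq,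
        Matrix.mul_apply, Matrix.diagonal_apply, Finset.sum_ite_eq, Finset.sum_ite_eq']
      try ring
    · simp [Matrix.diagonal_apply_ne _ h, Matrix.mul_diagonal, Matrix.diagonal_mul,
        Matrix.diagonal_apply_ne _ h]
  have key1 : (C * S * C) *ᵥ (C⁻¹ *ᵥ w) = C *ᵥ (S *ᵥ w) := by
    rw [Matrix.mulVec_mulVec, Matrix.mul_assoc, hCC, Matrix.mul_one,
      ← Matrix.mulVec_mulVec]
  have key2 : Dt *ᵥ (C⁻¹ *ᵥ w) = C *ᵥ (D *ᵥ w) := by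
    rw [hDtCDC, Matrix.mulVec_mulVec, Matrix.mul_assoc, hCC,
      Matrix.mul_one, ← Matrix.mulVec_mulVec]
  rw [key1, key2]
  have hinj : Function.Injective (C.mulVec) := by
    intro x y hxy
    have := congrArg (C⁻¹.mulVec) hxy
    rwa [Matrix.mulVec_mulVec, Matrix.mulVec_mulVec, Matrix.nonsing_inv_mul C, Matrix.one_mulVec, Matrix.one_mulVec] at this
    rw [hC, Matrix.det_diagonal]
    exact IsUnit.mk0 _ (Finset.prod_ne_zero_iff.mpr (fun i _ => hcne i))
  constructor
  · intro h
    rw [h, Matrix.mulVec_smul]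
  · intro h
    apply hinj
    rw [Matrix.mulVec_smul]
    exact h
end
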